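/- arXiv:2412.08060 — 3 statements merged into one kernel-verified Lean document; each statement's English description precedes it below -/
import Mathlib

section
/- Regret decomposition for constrained OCO: let u satisfy g_τ(u) ≤ 0 for all τ ≤ t, define L_τ(x) = V f_τ(x) + λ Φ'(Q_τ) g_τ^+(x) where g_τ^+(x)=max(0,g_τ(x)), Q_{τ+1} = Q_τ + λ g_τ^+(x_τ), Q_1 = 0, Φ convex non-decreasing with Φ(0)=0 and V, λ > 0. Then Φ(Q_{t+1}) - Φ(0) + V Σ_{τ=1}^t (f_τ(x_τ) - f_τ(u)) ≤ Σ_{τ=1}^t (L_τ(x_τ) - L_τ(u)) + λ Σ_{τ=1}^t g_τ^+(x_τ)(Φ'(Q_{τ+1}) - Φ'(Q_τ)). -/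
/-- Regret decomposition for constrained OCO (Lemma: regret decomposition). -/
theorem stmt_1 {X : Type*} (f g : ℕ → X → ℝ) (x : ℕ → X) (u : X)
    (Φ Φ' : ℝ → ℝ) (V lam : ℝ) (hV : 0 < V) (hlam : 0 < lam)
    (Q : ℕ → ℝ) (hQ1 : Q 1 = 0)
    (hrec : ∀ τ ≥ 1, Q (τ + 1) = Q τ + lam * max 0 (g τ (x τ)))
    (hconv : ConvexOn ℝ (Set.Ici (0 : ℝ)) Φ)
    (hderiv : ∀ y ∈ Set.Ici (0 : ℝ), HasDerivAt Φ (Φ' y) y)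
    (hmono : MonotoneOn Φ (Set.Ici (0 : ℝ)))
    (hΦ0 : Φ 0 = 0)
    (t : ℕ) (hu : ∀ τ ∈ Finset.Icc 1 t, g τ u ≤ 0) :
    Φ (Q (t + 1)) - Φ 0
      + V * ∑ τ ∈ Finset.Icc 1 t, (f τ (x τ) - f τ u)
    ≤ ∑ τ ∈ Finset.Icc 1 t,
        ((V * f τ (x τ) + lam * Φ' (Q τ) * max 0 (g τ (x τ)))
          - (V * f τ u + lam * Φ' (Q τ) * max 0 (g τ u)))
      + lam * ∑ τ ∈ Finset.Icc 1 t,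
          max 0 (g τ (x τ)) * (Φ' (Q (τ + 1)) - Φ' (Q τ)) := by
  have hgu : ∀ τ ∈ Finset.Icc 1 t, max 0 (g τ u) = 0 := fun τ hτ =>
    max_eq_left (hu τ hτ)
  -- nonnegativity of Q
  have hQnn : ∀ n : ℕ, 0 ≤ Q (n + 1) := by
    intro n
    induction n with
    | zero => rw [hQ1]
    | succ m ih =>
      rw [hrec (m + 1) (by omega)]
      have h0 : 0 ≤ lam * max 0 (g (m + 1) (x (m + 1))) :=
        mul_nonneg hlam.le (le_max_left _ _)
      linarith
  -- convexity tangent bound per step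
  have key : ∀ τ : ℕ, 1 ≤ τ →
      Φ (Q (τ + 1)) - Φ (Q τ) ≤ lam * max 0 (g τ (x τ)) * Φ' (Q (τ + 1)) := by
    intro τ hτ
    obtain ⟨m, rfl⟩ : ∃ m, τ = m + 1 := ⟨τ - 1, by omega⟩
    have hrecτ := hrec (m + 1) (by omega)
    rcases eq_or_lt_of_le (le_max_left 0 (g (m + 1) (x (m + 1)))) with h | h
    · rw [← h] at hrecτ ⊢
      simp [hrecτ]
    · have hlt : Q (m + 1) < Q (m + 1 + 1) := by
        rw [hrecτ]; nlinarith
      have hQa : Q (m + 1) ∈ Set.Ici (0 : ℝ) := hQnn m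
      have hQb : Q (m + 1 + 1) ∈ Set.Ici (0 : ℝ) := hQnn (m + 1)
      have hs := hconv.slope_le_of_hasDerivAt hQa hQb hlt (hderiv _ hQb)
      rw [slope_def_field] at hs
      have hd : Q (m + 1 + 1) - Q (m + 1) = lam * max 0 (g (m + 1) (x (m + 1))) := by
        rw [hrecτ]; ring
      have hpos : 0 < Q (m + 1 + 1) - Q (m + 1) := by linarith
      rw [div_le_iff₀ hpos] at hs
      calc Φ (Q (m + 1 + 1)) - Φ (Q (m + 1))
          ≤ Φ' (Q (m + 1 + 1)) * (Q (m + 1 + 1) - Q (m + 1)) := hs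
        _ = lam * max 0 (g (m + 1) (x (m + 1))) * Φ' (Q (m + 1 + 1)) := by
            rw [hd]; ring
  -- telescoping
  have htel : ∑ τ ∈ Finset.Icc 1 t, (Φ (Q (τ + 1)) - Φ (Q τ)) = Φ (Q (t + 1)) - Φ 0 := by
    rw [← Finset.Ico_add_one_right_eq_Icc, Finset.sum_Ico_eq_sum_range]
    have := Finset.sum_range_sub (fun i => Φ (Q (i + 1))) t
    simpa [hQ1, Nat.add_sub_cancel, add_comm 1] using this
  have hsum : Φ (Q (t + 1)) - Φ 0 ≤
      ∑ τ ∈ Finset.Icc 1 t, lam * max 0 (g τ (x τ)) * Φ' (Q (τ + 1)) := by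
    rw [← htel]
    exact Finset.sum_le_sum fun τ hτ => key τ (Finset.mem_Icc.mp hτ).1
  have hRHS : (∑ τ ∈ Finset.Icc 1 t,
        ((V * f τ (x τ) + lam * Φ' (Q τ) * max 0 (g τ (x τ)))
          - (V * f τ u + lam * Φ' (Q τ) * max 0 (g τ u)))
      + lam * ∑ τ ∈ Finset.Icc 1 t,
          max 0 (g τ (x τ)) * (Φ' (Q (τ + 1)) - Φ' (Q τ)))
      = V * ∑ τ ∈ Finset.Icc 1 t, (f τ (x τ) - f τ u)
        + ∑ τ ∈ Finset.Icc 1 t, lam * max 0 (g τ (x τ)) * Φ' (Q (τ + 1)) := by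
    rw [Finset.mul_sum, Finset.mul_sum, ← Finset.sum_add_distrib, ← Finset.sum_add_distrib]
    refine Finset.sum_congr rfl fun τ hτ => ?_
    rw [hgu τ hτ]; ring
  rw [hRHS]
  linarith
end

section
/- Adaptive learning rate inverse bound: define E_t = Σ_{τ=1}^t ε_τ with ε_τ ≥ 0 (and E_0 = E_{-1} = 0), constants β, B, L > 0, and η_t = min( √(βB)/(√(E_{t-1}) + √(E_{t-2})), √β / L ) (interpreting division by zero as +∞ so the first term is ignored when E_{t-1}=E_{t-2}=0). Then 1/η_t ≤ 2(√(E_t) + L√B)/√(βB). -/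
/-- Adaptive learning rate inverse bound: `1/η_t ≤ 2(√E_t + L√B)/√(βB)`,
where `η_t = min(√(βB)/(√E_{t-1} + √E_{t-2}), √β/L)` and the first argument of
the min is ignored (as if it were `+∞`) when `E_{t-1} = 0`. -/
theorem stmt_6 (ε : ℕ → ℝ) (hε : ∀ τ, 0 ≤ ε τ)
    (β B L : ℝ) (hβ : 0 < β) (hB : 0 < B) (hL : 0 < L)
    (E : ℕ → ℝ) (hE : ∀ s, E s = ∑ τ ∈ Finset.Icc 1 s, ε τ)
    (η : ℕ → ℝ)
    (hη : ∀ s, η s =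
      if E (s - 1) = 0 then Real.sqrt β / L
      else min (Real.sqrt (β * B) / (Real.sqrt (E (s - 1)) + Real.sqrt (E (s - 2))))
               (Real.sqrt β / L)) :
    ∀ t, 1 / η t ≤ 2 * (Real.sqrt (E t) + L * Real.sqrt B) / Real.sqrt (β * B) := by
  intro t
  have hEnn : ∀ s, 0 ≤ E s := fun s => by
    rw [hE s]; exact Finset.sum_nonneg fun i _ => hε i
  have hmono : ∀ s u : ℕ, s ≤ u → E s ≤ E u := fun s u h => by
    rw [hE s, hE u]
    exact Finset.sum_le_sum_of_subset_of_nonneg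
      (Finset.Icc_subset_Icc_right h) (fun i _ _ => hε i)
  have hβB : 0 < Real.sqrt (β * B) := Real.sqrt_pos.2 (mul_pos hβ hB)
  have hsβ : 0 < Real.sqrt β := Real.sqrt_pos.2 hβ
  have hsB : 0 < Real.sqrt B := Real.sqrt_pos.2 hB
  have hsplit : Real.sqrt (β * B) = Real.sqrt β * Real.sqrt B := Real.sqrt_mul hβ.le B
  have hEt : 0 ≤ Real.sqrt (E t) := Real.sqrt_nonneg _
  have key2 : 1 / (Real.sqrt β / L) ≤
      2 * (Real.sqrt (E t) + L * Real.sqrt B) / Real.sqrt (β * B) := by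
    rw [one_div_div, hsplit, div_le_div_iff₀ hsβ (by positivity)]
    nlinarith [mul_nonneg hEt hsβ.le, mul_pos (mul_pos hL hsB) hsβ]
  rw [hη t]
  split_ifs with h0
  · exact key2
  · rcases min_cases (Real.sqrt (β * B) / (Real.sqrt (E (t-1)) + Real.sqrt (E (t-2))))
      (Real.sqrt β / L) with ⟨hm, _⟩ | ⟨hm, _⟩
    · rw [hm, one_div_div]
      have h1 : Real.sqrt (E (t-1)) ≤ Real.sqrt (E t) :=
        Real.sqrt_le_sqrt (hmono _ _ (Nat.sub_le t 1))
      have h2 : Real.sqrt (E (t-2)) ≤ Real.sqrt (E t) :=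
        Real.sqrt_le_sqrt (hmono _ _ (Nat.sub_le t 2))
      rw [div_le_div_iff₀ hβB hβB]
      nlinarith [mul_pos (mul_pos hL hsB) hβB, mul_nonneg hEt hβB.le]
    · rw [hm]; exact key2
end

section
/- One-step optimistic mirror descent inequality: let R be β-strongly convex (w.r.t. norm ‖·‖) on closed convex X with Bregman divergence B(x;y). Suppose x̃_{t+1} = argmin_{x∈X} ⟨ℓ_t, x⟩ + B(x; x̃_t)/η_t and x_t = argmin_{x∈X} ⟨ℓ̂_t, x⟩ + B(x; x̃_t)/η_t. Then for all u ∈ X: η_t ⟨ℓ_t, x_t - u⟩ ≤ B(u; x̃_t) - B(u; x̃_{t+1}) + η_t ‖ℓ_t - ℓ̂_t‖* · ‖x_t - x̃_{t+1}‖ - B(x̃_{t+1}; x_t) - B(x_t; x̃_t). -/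
/-!
Writing the first-order optimality condition of each mirror step as a variational inequality and
applying the three-point identity of the Bregman divergence turns the step defining `x̃'` (tested
at `u`) and the step defining `xₜ` (tested at `x̃'`) into two inequalities whose sum bounds
`η (ℓ(x̃' - u) + ℓ̂(xₜ - x̃'))`. The remaining term `η (ℓ - ℓ̂)(xₜ - x̃')` is bounded by the dual norm.
-/

section

variable {E : Type*} [NormedAddCommGroup E] [NormedSpace ℝ E]

def bregman (R : E → ℝ) (gradR : E → E →L[ℝ] ℝ) (x y : E) : ℝ :=
  R x - R y - gradR y (x - y)

theorem bregman_three_point (R : E → ℝ) (gradR : E → E →L[ℝ] ℝ) (u w z : E) :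
    bregman R gradR u z - bregman R gradR u w - bregman R gradR w z
      = (gradR w - gradR z) (u - w) := by
  simp only [bregman, sub_apply, map_sub]
  ring

theorem hasFDerivAt_bregman_left {R : E → ℝ} {gradR : E → E →L[ℝ] ℝ}
    (hR : ∀ x, HasFDerivAt R (gradR x) x) (z p : E) :
    HasFDerivAt (fun x => bregman R gradR x z) (gradR p - gradR z) p := by
  have hlin : HasFDerivAt (fun x => gradR z (x - z)) (gradR z) p := by
    simpa only [map_sub] using (gradR z).hasFDerivAt.sub_const (gradR z z)
  exact ((hR p).sub_const (R z)).sub hlin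

theorem mirror_step_le {R : E → ℝ} {gradR : E → E →L[ℝ] ℝ}
    (hR : ∀ x, HasFDerivAt R (gradR x) x) {X : Set E} (hX : Convex ℝ X) {η : ℝ} (hη : 0 < η)
    (c : E →L[ℝ] ℝ) {z p : E} (hp : p ∈ X)
    (hmin : ∀ y ∈ X, c p + bregman R gradR p z / η ≤ c y + bregman R gradR y z / η)
    {v : E} (hv : v ∈ X) :
    η * c (p - v) ≤ bregman R gradR v z - bregman R gradR v p - bregman R gradR p z := by
  have hderiv : HasFDerivAt (fun x => c x + bregman R gradR x z / η)
      (c + η⁻¹ • (gradR p - gradR z)) p := by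
    simp_rw [div_eq_mul_inv]
    exact c.hasFDerivAt.add ((hasFDerivAt_bregman_left hR z p).mul_const η⁻¹)
  have hfirstOrder : 0 ≤ (c + η⁻¹ • (gradR p - gradR z)) (v - p) :=
    (isMinOn_iff.mpr hmin).localize.hasFDerivWithinAt_nonneg hderiv.hasFDerivWithinAt
      (sub_mem_posTangentConeAt_of_segment_subset (hX.segment_subset hp hv))
  have hscaled : 0 ≤ η * c (v - p) + (gradR p - gradR z) (v - p) := by
    have := mul_nonneg hη.le hfirstOrder
    rwa [add_apply, smul_apply, smul_eq_mul, mul_add,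
      ← mul_assoc, mul_inv_cancel₀ hη.ne', one_mul] at this
  rw [bregman_three_point]
  simp only [map_sub] at hscaled ⊢
  linarith

end

theorem stmt_12_general {E : Type*} [NormedAddCommGroup E] [NormedSpace ℝ E]
    (X : Set E) (hXconv : Convex ℝ X)
    (R : E → ℝ) (gradR : E → (E →L[ℝ] ℝ))
    (hRderiv : ∀ x, HasFDerivAt R (gradR x) x)
    (B : E → E → ℝ) (hB : ∀ x y, B x y = R x - R y - gradR y (x - y))
    (η : ℝ) (hη : 0 < η)
    (ℓ ℓhat : E →L[ℝ] ℝ)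
    (xt xtilde xtilde' : E)
    (hxtilde' : xtilde' ∈ X) (hxt : xt ∈ X)
    (hmin1 : ∀ y ∈ X, ℓ xtilde' + B xtilde' xtilde / η ≤ ℓ y + B y xtilde / η)
    (hmin2 : ∀ y ∈ X, ℓhat xt + B xt xtilde / η ≤ ℓhat y + B y xtilde / η)
    (u : E) (hu : u ∈ X) :
    η * ℓ (xt - u)
      ≤ B u xtilde - B u xtilde'
        + η * ‖ℓ - ℓhat‖ * ‖xt - xtilde'‖
        - B xtilde' xt - B xt xtilde := by
  obtain rfl : B = bregman R gradR := funext fun x => funext (hB x)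
  have hstep : η * ℓ (xtilde' - u) ≤ bregman R gradR u xtilde - bregman R gradR u xtilde'
      - bregman R gradR xtilde' xtilde :=
    mirror_step_le hRderiv hXconv hη ℓ hxtilde' hmin1 hu
  have hoptimisticStep : η * ℓhat (xt - xtilde') ≤ bregman R gradR xtilde' xtilde
      - bregman R gradR xtilde' xt - bregman R gradR xt xtilde :=
    mirror_step_le hRderiv hXconv hη ℓhat hxt hmin2 hxtilde'
  have hdual : (ℓ - ℓhat) (xt - xtilde') ≤ ‖ℓ - ℓhat‖ * ‖xt - xtilde'‖ :=
    (le_abs_self _).trans ((ℓ - ℓhat).le_opNorm _)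
  have hsplit : ℓ (xt - u)
      = ℓ (xtilde' - u) + ℓhat (xt - xtilde') + (ℓ - ℓhat) (xt - xtilde') := by
    simp only [map_sub, sub_apply]
    ring
  rw [hsplit, mul_add, mul_add, mul_assoc η]
  linarith [mul_le_mul_of_nonneg_left hdual hη.le]

/-- One-step optimistic online mirror descent inequality (Lemma: optimistic OMS). -/
theorem stmt_12 {E : Type*} [NormedAddCommGroup E] [NormedSpace ℝ E]
    (X : Set E) (hXclosed : IsClosed X) (hXconv : Convex ℝ X)
    (β : ℝ) (hβ : 0 < β)
    (R : E → ℝ) (gradR : E → (E →L[ℝ] ℝ))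
    (hRderiv : ∀ x, HasFDerivAt R (gradR x) x)
    (hRsc : ∀ x y, R y + gradR y (x - y) + (β / 2) * ‖x - y‖ ^ 2 ≤ R x)
    (B : E → E → ℝ) (hB : ∀ x y, B x y = R x - R y - gradR y (x - y))
    (η : ℝ) (hη : 0 < η)
    (ℓ ℓhat : E →L[ℝ] ℝ)
    (xt xtilde xtilde' : E)
    (hxtilde : xtilde ∈ X) (hxtilde' : xtilde' ∈ X) (hxt : xt ∈ X)
    (hmin1 : ∀ y ∈ X, ℓ xtilde' + B xtilde' xtilde / η ≤ ℓ y + B y xtilde / η)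
    (hmin2 : ∀ y ∈ X, ℓhat xt + B xt xtilde / η ≤ ℓhat y + B y xtilde / η)
    (u : E) (hu : u ∈ X) :
    η * ℓ (xt - u)
      ≤ B u xtilde - B u xtilde'
        + η * ‖ℓ - ℓhat‖ * ‖xt - xtilde'‖
        - B xtilde' xt - B xt xtilde :=
  stmt_12_general X hXconv R gradR hRderiv B hB η hη ℓ ℓhat xt xtilde xtilde' hxtilde' hxt hmin1
    hmin2 u hu
end
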